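/- For integers a ≥ b ≥ 1, the real number β defined as the unique real root greater than 1 of x^3 − a x^2 − b x − 1 is a Pisot number: it is an algebraic integer greater than 1 all of whose Galois conjugates have complex modulus strictly less than 1. -/

import Mathlib

/-!
Dividing the cubic by `x - β` leaves `x² + (β - a) x + c` with `c = β² - aβ - b = 1/β ∈ (0, 1)`,
whose roots are the conjugates of `β`. Evaluating the cubic at `±1` shows that this quadratic is
positive at `±1`, so it satisfies the Schur–Cohn conditions `|c| < 1`, `|β - a| < 1 + c`, which
force both of its roots into the open unit disc.
-/

open Polynomial in
theorem isIntegral_of_cubic_eq_zero {R A : Type*} [CommRing R] [CommRing A] [Algebra R A]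
    (a b c : R) (x : A)
    (hx : x ^ 3 - algebraMap R A a * x ^ 2 - algebraMap R A b * x - algebraMap R A c = 0) :
    IsIntegral R x :=
  ⟨X ^ 3 - C a * X ^ 2 - C b * X - C c, by monicity!, by
    simpa [eval₂_sub, eval₂_mul, eval₂_pow, eval₂_X, eval₂_C] using hx⟩

theorem quadratic_eq_zero_of_cubic_eq_zero {K : Type*} [CommRing K] [IsDomain K]
    {a b c β z : K} (hβ : β ^ 3 - a * β ^ 2 - b * β - c = 0)
    (hz : z ^ 3 - a * z ^ 2 - b * z - c = 0) (hne : z ≠ β) :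
    z ^ 2 + (β - a) * z + (β ^ 2 - a * β - b) = 0 := by
  have hfactor : (z - β) * (z ^ 2 + (β - a) * z + (β ^ 2 - a * β - b)) = 0 := by
    linear_combination hz - hβ
  exact (mul_eq_zero.mp hfactor).resolve_left (sub_ne_zero.mpr hne)

theorem abs_lt_one_of_sq_add_mul_add_eq_zero {p q x : ℝ} (hq : |q| < 1) (hp : |p| < 1 + q)
    (hx : x ^ 2 + p * x + q = 0) : |x| < 1 := by
  -- `x` and its partner root `y` satisfy `(1 - x)(1 - y) = 1 + p + q > 0`,
  -- `(1 + x)(1 + y) = 1 - p + q > 0` and `|x y| = |q| < 1`.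
  set y := -p - x
  have hprod : x * y = q := by linear_combination -hx
  rw [abs_lt] at hq hp ⊢
  have hplus : 0 < (1 - x) * (1 - y) := by nlinarith
  have hminus : 0 < (1 + x) * (1 + y) := by nlinarith
  constructor <;> by_contra! h <;> nlinarith

theorem Complex.norm_lt_one_of_sq_add_mul_add_eq_zero {p q : ℝ} (hq : |q| < 1)
    (hp : |p| < 1 + q) {z : ℂ} (hz : z ^ 2 + p * z + q = 0) : ‖z‖ < 1 := by
  have hre : z.re ^ 2 - z.im ^ 2 + p * z.re + q = 0 := by
    simpa [sq] using congrArg Complex.re hz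
  have him : z.im * (2 * z.re + p) = 0 := by
    have h := congrArg Complex.im hz
    simp only [sq, Complex.add_im, Complex.mul_im, Complex.ofReal_re, Complex.ofReal_im,
      Complex.zero_im] at h
    linear_combination h
  rcases mul_eq_zero.mp him with hreal | hcenter
  · have hx : z.re ^ 2 + p * z.re + q = 0 := by simpa [hreal] using hre
    have hz_eq : z = (z.re : ℂ) := Complex.ext rfl (by simpa using hreal)
    rw [hz_eq, Complex.norm_real, Real.norm_eq_abs]
    exact abs_lt_one_of_sq_add_mul_add_eq_zero hq hp hx
  · have hnormSq : ‖z‖ ^ 2 = q := by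
      rw [Complex.sq_norm, Complex.normSq_apply]
      linear_combination -hre + z.re * hcenter
    nlinarith [abs_lt.mp hq, norm_nonneg z]

theorem schurCohn_of_cubic_root {a b β : ℝ} (hb : 1 ≤ b) (hab : b ≤ a) (hβ1 : 1 < β)
    (hroot : β ^ 3 - a * β ^ 2 - b * β - 1 = 0) :
    |β ^ 2 - a * β - b| < 1 ∧ |β - a| < 1 + (β ^ 2 - a * β - b) := by
  set c := β ^ 2 - a * β - b
  have hβc : β * c = 1 := by linear_combination hroot
  have hc_pos : 0 < c := by nlinarith
  have hc_lt : c < 1 := by nlinarith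
  -- The values of the cubic at `1` and `-1`, factored through `x - β`.
  have h_at_one : (1 - β) * (1 + (β - a) + c) = -(a + b) := by linear_combination -hroot
  have h_at_neg_one : (-1 - β) * (1 - (β - a) + c) = b - a - 2 := by
    linear_combination -hroot
  refine ⟨abs_lt.mpr ⟨by linarith, hc_lt⟩, abs_lt.mpr ⟨?_, ?_⟩⟩ <;> nlinarith

/-- The dominant root β of x³ - ax² - bx - 1 (a ≥ b ≥ 1) is a Pisot number:
an algebraic integer greater than 1 whose Galois conjugates (the other complex
roots of its minimal polynomial, the cubic) have modulus < 1. -/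
theorem beta_is_pisot (a b : ℤ) (hb : 1 ≤ b) (hab : b ≤ a)
    (β : ℝ) (hβ1 : 1 < β)
    (hroot : β ^ 3 - (a : ℝ) * β ^ 2 - (b : ℝ) * β - 1 = 0) :
    IsIntegral ℤ β ∧ 1 < β ∧
      ∀ z : ℂ, z ^ 3 - (a : ℂ) * z ^ 2 - (b : ℂ) * z - 1 = 0 → z ≠ (β : ℂ) →
        ‖z‖ < 1 := by
  refine ⟨isIntegral_of_cubic_eq_zero a b 1 β (by simpa using hroot), hβ1, fun z hz hne => ?_⟩
  obtain ⟨hc, hp⟩ := schurCohn_of_cubic_root (a := (a : ℝ)) (b := b)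
    (by exact_mod_cast hb) (by exact_mod_cast hab) hβ1 hroot
  have hβC : (β : ℂ) ^ 3 - (a : ℂ) * (β : ℂ) ^ 2 - (b : ℂ) * β - 1 = 0 := by
    exact_mod_cast congrArg Complex.ofReal hroot
  have hquad := quadratic_eq_zero_of_cubic_eq_zero hβC hz hne
  refine Complex.norm_lt_one_of_sq_add_mul_add_eq_zero hc hp ?_
  push_cast
  exact hquad
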